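/- arXiv:2011.13508 — 3 statements merged into one kernel-verified Lean document; each statement's English description precedes it below -/
import Mathlib

section
/- Let R : ℂⁿ × ℂⁿ × ℂⁿ × ℂⁿ → ℂ be a curvature-type tensor, i.e. R(X,Ȳ,Z,W̄) is linear in X and Z, conjugate-linear in Y and W, and satisfies the Kähler symmetries R(X,Ȳ,Z,W̄) = R(Z,Ȳ,X,W̄) = R(Z,W̄,X,Ȳ) and conj(R(X,Ȳ,Z,W̄)) = R(Y,X̄,W,Z̄). Define Ric(X,Ȳ) = Σᵢ R(X,Ȳ,eᵢ,ēᵢ) for an orthonormal basis {eᵢ}. Suppose that for every k-dimensional complex subspace Σ ⊆ ℂⁿ containing a unit vector X, one has Σ_{i=1}^k R(X,X̄,Eᵢ,Ēᵢ) ≤ -(k+1)σ for every orthonormal basis {E₁,...,E_k} of Σ with E₁ = X (the condition Ric_k ≤ -(k+1)σ), where 1 < k < n and σ ≥ 0. Then for every X ∈ ℂⁿ: (k-1)|X|² Ric(X,X̄) + (n-k) R(X,X̄,X,X̄) ≤ -(n-1)(k+1)σ |X|⁴. -/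
/-! For a unit vector `X`, complete it to an orthonormal basis `X = e₀, e₁, …, e_m` (`m = n - 1`).
Together with `X`, the `m` cyclic windows `e_{t+1}, …, e_{t+k-1}` (indices mod `m`) are orthonormal
`k`-frames starting at `X`. Summing the `Ric_k` bound over them counts `R(X,X̄,X,X̄)` `m` times and
every other `R(X,X̄,eᵢ,ēᵢ)` exactly `k - 1` times, while `Ric(X,X̄)` is the trace of
`R(X,X̄,·,·)` over this basis. The general case follows by homogeneity. -/

open Finset

open scoped ComplexConjugate InnerProductSpace

theorem mul_add_mul_sum_le_of_forall_injective {m j : ℕ} (hjm : j ≤ m) (a C : ℝ)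
    (φ : Fin m → ℝ) (h : ∀ g : Fin j → Fin m, Function.Injective g → a + ∑ i, φ (g i) ≤ C) :
    m * a + j * ∑ t, φ t ≤ m * C := by
  rcases Nat.eq_zero_or_pos m with rfl | hm
  · obtain rfl : j = 0 := by omega
    simp
  have : NeZero m := ⟨hm.ne'⟩
  have hshift (i : Fin j) : ∑ t : Fin m, φ (t + Fin.castLE hjm i) = ∑ t, φ t :=
    Equiv.sum_comp (Equiv.addRight (Fin.castLE hjm i)) φ
  calc m * a + j * ∑ t, φ t = ∑ t : Fin m, (a + ∑ i : Fin j, φ (t + Fin.castLE hjm i)) := by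
        rw [sum_add_distrib, sum_comm]
        simp [hshift]
    _ ≤ ∑ _t : Fin m, C :=
        sum_le_sum fun t _ => h _ ((add_right_injective t).comp (Fin.castLE_injective hjm))
    _ = m * C := by simp

theorem exists_eq_smul_of_norm_eq_one {𝕜 E : Type*} [RCLike 𝕜] [NormedAddCommGroup E]
    [NormedSpace 𝕜 E] [Nontrivial E] (X : E) :
    ∃ (c : 𝕜) (u : E), ‖u‖ = 1 ∧ X = c • u := by
  obtain rfl | hX := eq_or_ne X 0
  · obtain ⟨Y, hY⟩ := exists_ne (0 : E)
    exact ⟨0, _, norm_smul_inv_norm (𝕜 := 𝕜) hY, (zero_smul 𝕜 _).symm⟩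
  refine ⟨‖X‖, _, norm_smul_inv_norm (𝕜 := 𝕜) hX, ?_⟩
  rw [smul_smul, mul_inv_cancel₀ (by simpa using hX), one_smul]

section InnerProductSpace

variable {𝕜 E : Type*} [RCLike 𝕜] [NormedAddCommGroup E] [InnerProductSpace 𝕜 E]

theorem Orthonormal.mul_sum_add_mul_le_of_forall_frame {m j : ℕ} {v : Fin (m + 1) → E}
    (hv : Orthonormal 𝕜 v) (hjm : j ≤ m) (f : E → ℝ) (C : ℝ)
    (h : ∀ w : Fin (j + 1) → E, Orthonormal 𝕜 w → w 0 = v 0 → ∑ i, f (w i) ≤ C) :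
    j * ∑ i, f (v i) + ((m : ℝ) - j) * f (v 0) ≤ m * C := by
  have hwindows := mul_add_mul_sum_le_of_forall_injective hjm (f (v 0)) C (fun t => f (v t.succ))
    fun g hg => by
      have hinj : Function.Injective (Fin.cons 0 (Fin.succ ∘ g) : Fin (j + 1) → Fin (m + 1)) :=
        Fin.cons_injective_iff.mpr
          ⟨fun ⟨i, hi⟩ => Fin.succ_ne_zero _ hi, (Fin.succ_injective _).comp hg⟩
      simpa [Fin.sum_univ_succ] using h _ (hv.comp _ hinj) rfl
  rw [Fin.sum_univ_succ]
  linear_combination hwindows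

theorem LinearMap.sum_apply_self_orthonormalBasis_eq (B : E →ₗ[𝕜] E →ₗ⋆[𝕜] 𝕜) {ι ι' : Type*}
    [Fintype ι] [Fintype ι'] (b : OrthonormalBasis ι 𝕜 E) (b' : OrthonormalBasis ι' 𝕜 E) :
    ∑ i, B (b i) (b i) = ∑ j, B (b' j) (b' j) := by
  calc ∑ i, B (b i) (b i) = ∑ i, ∑ j, ⟪b' j, b i⟫_𝕜 * B (b' j) (b i) := by
        refine sum_congr rfl fun i _ => ?_
        nth_rw 1 [← b'.sum_repr' (b i)]
        simp [LinearMap.sum_apply]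
    _ = ∑ j, B (b' j) (∑ i, ⟪b i, b' j⟫_𝕜 • b i) := by
        rw [sum_comm]
        simp [inner_conj_symm]
    _ = ∑ j, B (b' j) (b' j) := by simp only [b.sum_repr']

theorem exists_orthonormalBasis_zero_eq_of_norm_eq_one [FiniteDimensional 𝕜 E] {m : ℕ}
    (hE : Module.finrank 𝕜 E = m + 1) {X : E} (hX : ‖X‖ = 1) :
    ∃ b : OrthonormalBasis (Fin (m + 1)) 𝕜 E, b 0 = X := by
  obtain ⟨b, hb⟩ := Orthonormal.exists_orthonormalBasis_extension_of_card_eq (𝕜 := 𝕜)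
    (v := fun _ => X) (s := ({0} : Set (Fin (m + 1)))) (by simpa using hE) (by simpa using hX)
  exact ⟨b, hb 0 rfl⟩

end InnerProductSpace

section Curvature

variable {E : Type*} [NormedAddCommGroup E] [InnerProductSpace ℂ E]

-- `R X Y Z W` stands for the paper's `R(X, Ȳ, Z, W̄)`.
structure IsHermitianCurvature (R : E → E → E → E → ℂ) : Prop where
  add_first : ∀ X X' Y Z W, R (X + X') Y Z W = R X Y Z W + R X' Y Z W
  smul_first : ∀ (c : ℂ) X Y Z W, R (c • X) Y Z W = c * R X Y Z W
  swap_first_third : ∀ X Y Z W, R X Y Z W = R Z Y X W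
  conj_apply : ∀ X Y Z W, conj (R X Y Z W) = R Y X W Z

namespace IsHermitianCurvature

variable {R : E → E → E → E → ℂ}

theorem add_third (hR : IsHermitianCurvature R) (X Y Z Z' W : E) :
    R X Y (Z + Z') W = R X Y Z W + R X Y Z' W := by
  rw [hR.swap_first_third X, hR.add_first, ← hR.swap_first_third X, ← hR.swap_first_third X]

theorem smul_third (hR : IsHermitianCurvature R) (c : ℂ) (X Y Z W : E) :
    R X Y (c • Z) W = c * R X Y Z W := by
  rw [hR.swap_first_third X, hR.smul_first, ← hR.swap_first_third X]

theorem smul_second (hR : IsHermitianCurvature R) (c : ℂ) (X Y Z W : E) :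
    R X (c • Y) Z W = conj c * R X Y Z W := by
  apply (starRingEnd ℂ).injective
  simp only [map_mul, Complex.conj_conj, hR.conj_apply, hR.smul_first]

theorem add_fourth (hR : IsHermitianCurvature R) (X Y Z W W' : E) :
    R X Y Z (W + W') = R X Y Z W + R X Y Z W' := by
  apply (starRingEnd ℂ).injective
  simp only [map_add, hR.conj_apply, hR.add_third]

theorem smul_fourth (hR : IsHermitianCurvature R) (c : ℂ) (X Y Z W : E) :
    R X Y Z (c • W) = conj c * R X Y Z W := by
  apply (starRingEnd ℂ).injective
  simp only [map_mul, Complex.conj_conj, hR.conj_apply, hR.smul_third]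

def sesqForm (hR : IsHermitianCurvature R) (X Y : E) : E →ₗ[ℂ] E →ₗ⋆[ℂ] ℂ :=
  LinearMap.mk₂'ₛₗ (RingHom.id ℂ) (starRingEnd ℂ) (R X Y) (hR.add_third X Y)
    (fun c => hR.smul_third c X Y) (hR.add_fourth X Y) (fun c => hR.smul_fourth c X Y)

theorem sum_orthonormalBasis_eq (hR : IsHermitianCurvature R) (X Y : E) {ι ι' : Type*}
    [Fintype ι] [Fintype ι'] (b : OrthonormalBasis ι ℂ E) (b' : OrthonormalBasis ι' ℂ E) :
    ∑ i, R X Y (b i) (b i) = ∑ j, R X Y (b' j) (b' j) :=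
  (hR.sesqForm X Y).sum_apply_self_orthonormalBasis_eq b b'

theorem smul_first_second (hR : IsHermitianCurvature R) (c : ℂ) (X Y Z W : E) :
    R (c • X) (c • Y) Z W = ‖c‖ ^ 2 * R X Y Z W := by
  rw [hR.smul_first, hR.smul_second, ← mul_assoc, Complex.mul_conj']

theorem smul_third_fourth (hR : IsHermitianCurvature R) (c : ℂ) (X Y Z W : E) :
    R X Y (c • Z) (c • W) = ‖c‖ ^ 2 * R X Y Z W := by
  rw [hR.smul_third, hR.smul_fourth, ← mul_assoc, Complex.mul_conj']

end IsHermitianCurvature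

end Curvature

/-- Lemma 2.1 of Chu–Lee–Tam: if a Kähler curvature-type tensor `R` on `ℂⁿ` satisfies
`Ric_k ≤ -(k+1)σ` (for every `k`-dimensional subspace containing a unit vector `X`,
i.e. for every orthonormal family `E₁ = X, E₂, …, E_k`), where `1 < k < n` and `σ ≥ 0`,
then `(k-1)|X|² Ric(X,X̄) + (n-k) R(X,X̄,X,X̄) ≤ -(n-1)(k+1)σ |X|⁴` for every `X`. -/
theorem riccik_neg_implies_quartic_ineq (n k : ℕ) (hk : 1 < k) (hkn : k < n)
    (σ : ℝ)
    (R : EuclideanSpace ℂ (Fin n) → EuclideanSpace ℂ (Fin n) →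
          EuclideanSpace ℂ (Fin n) → EuclideanSpace ℂ (Fin n) → ℂ)
    (hadd1 : ∀ X X' Y Z W, R (X + X') Y Z W = R X Y Z W + R X' Y Z W)
    (hsmul1 : ∀ (c : ℂ) X Y Z W, R (c • X) Y Z W = c * R X Y Z W)
    (hsym1 : ∀ X Y Z W, R X Y Z W = R Z Y X W)
    (hconj : ∀ X Y Z W, (starRingEnd ℂ) (R X Y Z W) = R Y X W Z)
    (Ric : EuclideanSpace ℂ (Fin n) → EuclideanSpace ℂ (Fin n) → ℂ)
    (hRic : ∀ X Y, Ric X Y =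
      ∑ i : Fin n, R X Y (EuclideanSpace.basisFun (Fin n) ℂ i) (EuclideanSpace.basisFun (Fin n) ℂ i))
    (hRick : ∀ (X : EuclideanSpace ℂ (Fin n)), ‖X‖ = 1 →
      ∀ v : Fin k → EuclideanSpace ℂ (Fin n), Orthonormal ℂ v → v ⟨0, by omega⟩ = X →
        (∑ i : Fin k, R X X (v i) (v i)).re ≤ -((k : ℝ) + 1) * σ) :
    ∀ X : EuclideanSpace ℂ (Fin n),
      ((k : ℝ) - 1) * ‖X‖ ^ 2 * (Ric X X).re + ((n : ℝ) - k) * (R X X X X).re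
        ≤ -((n : ℝ) - 1) * ((k : ℝ) + 1) * σ * ‖X‖ ^ 4 := by
  have hR : IsHermitianCurvature R := ⟨hadd1, hsmul1, hsym1, hconj⟩
  obtain ⟨m, rfl⟩ : ∃ m, n = m + 1 := ⟨n - 1, by omega⟩
  obtain ⟨j, rfl⟩ : ∃ j, k = j + 1 := ⟨k - 1, by omega⟩
  intro X
  obtain ⟨c, u, hu, rfl⟩ := exists_eq_smul_of_norm_eq_one (𝕜 := ℂ) X
  obtain ⟨b, hb⟩ := exists_orthonormalBasis_zero_eq_of_norm_eq_one finrank_euclideanSpace_fin hu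
  have hRic_u : (Ric u u).re = ∑ i, (R u u (b i) (b i)).re := by
    rw [hRic, hR.sum_orthonormalBasis_eq u u _ b, Complex.re_sum]
  have hframes := b.orthonormal.mul_sum_add_mul_le_of_forall_frame (by omega : j ≤ m)
    (fun Z => (R u u Z Z).re) (-(((j + 1 : ℕ) : ℝ) + 1) * σ) fun w hw hw0 => by
      simpa [Complex.re_sum] using hRick u hu w hw (hw0.trans hb)
  have hRic_smul : Ric (c • u) (c • u) = ‖c‖ ^ 2 * Ric u u := by
    simp only [hRic, hR.smul_first_second, mul_sum]
  have hR_smul : R (c • u) (c • u) (c • u) (c • u) = ‖c‖ ^ 4 * R u u u u := by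
    rw [hR.smul_first_second, hR.smul_third_fourth]
    ring
  rw [hb, ← hRic_u] at hframes
  rw [norm_smul, hu, mul_one, hRic_smul, hR_smul, ← Complex.ofReal_pow, ← Complex.ofReal_pow,
    Complex.re_ofReal_mul, Complex.re_ofReal_mul]
  have hscaled := mul_le_mul_of_nonneg_left hframes (pow_nonneg (norm_nonneg c) 4)
  push_cast at hscaled ⊢
  linear_combination hscaled
end

section
/- Let E be a complex vector space of dimension r with Hermitian inner product, T a complex vector space of dimension n. Let Θ : T × T̄ × E × Ē → ℂ be a tensor which is Hermitian in the sense that conj(Θ(α,β̄,i,k̄)) = Θ(β,ᾱ,k,ī) (indices denote orthonormal basis vectors). Suppose Θ is Griffiths nonnegative and Griffiths positive for generic directions: for all v ∈ T and w ∈ E, Θ(v,v̄,w,w̄) ≥ 0, with strict inequality whenever v ≠ 0 and w ≠ 0. Then for every nonzero τ = (τ^{iα}) ∈ T ⊗ E: Σ_{α,β,i,k} Θ_{αβ̄kk̄} τ^{iα} conj(τ^{iβ}) + Σ_{α,β,i,k} Θ_{αβ̄ik̄} τ^{iα} conj(τ^{kβ}) > 0 (Demailly–Skoda: Griffiths positivity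 of E implies Nakano positivity of E ⊗ det E). -/
/-!
Demailly–Skoda, with a finite group in place of the torus. Test the Griffiths form on the pairs
`(v_ψ, w_ψ)` where `w_ψ = (ψ(eᵢ))ᵢ` for a character `ψ` of `(ℤ/3)^r` and `v_ψ = ∑ₗ conj (w_ψ l) τₗ`.
Orthogonality of characters gives
`∑_ψ w_ψ i * w_ψ j * conj (w_ψ k) * conj (w_ψ l) = 3^r [{i, j} = {k, l}]`,
so the sum of these Griffiths values is `3^r (A + B - C)`, where `A + B` is the quantity in the
theorem and `C = ∑ᵢ Θ(τᵢ, τᵢ, eᵢ, eᵢ) ≥ 0`. The sum is positive because the second moments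
`∑_ψ w_ψ i * conj (w_ψ j) = 3^r [i = j]` recover `τ` from the `v_ψ`, so some `v_ψ` is nonzero.
-/

open Finset ComplexConjugate

namespace AddChar

variable {A : Type*} [AddCommGroup A] [Fintype A] [DecidableEq A]

lemma sum_apply_mul_conj_apply (a b : A) :
    ∑ ψ : AddChar A ℂ, ψ a * conj (ψ b) = if a = b then (Fintype.card A : ℂ) else 0 := by
  simp_rw [← map_neg_eq_conj, ← map_add_eq_mul, ← sub_eq_add_neg, sum_apply_eq_ite, sub_eq_zero]

lemma sum_apply_mul_apply_mul_conj_apply_mul_conj_apply (a b c d : A) :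
    ∑ ψ : AddChar A ℂ, ψ a * ψ b * conj (ψ c) * conj (ψ d) =
      if a + b = c + d then (Fintype.card A : ℂ) else 0 := by
  simp_rw [← map_neg_eq_conj, ← map_add_eq_mul, ← sub_eq_add_neg, sum_apply_eq_ite, sub_sub,
    sub_eq_zero]

end AddChar

section GriffithsForm

variable {ι κ Ψ : Type*} [Fintype ι] [Fintype κ] [Fintype Ψ]

def griffithsForm (Θ : ι → ι → κ → κ → ℂ) (v : ι → ℂ) (w : κ → ℂ) : ℂ :=
  ∑ α, ∑ β, ∑ i, ∑ k, Θ α β i k * v α * conj (v β) * w i * conj (w k)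

lemma sum_griffithsForm_single [DecidableEq κ] (Θ : ι → ι → κ → κ → ℂ) (τ : κ → ι → ℂ) :
    ∑ i, griffithsForm Θ (τ i) (Pi.single i 1) =
      ∑ α, ∑ β, ∑ i, Θ α β i i * τ i α * conj (τ i β) := by
  simp only [griffithsForm, Pi.single_apply, mul_ite, mul_one, mul_zero, apply_ite conj, map_one,
    map_zero, sum_ite_eq', mem_univ, if_true]
  rw [sum_comm]
  exact sum_congr rfl fun α _ => sum_comm

/-- `τ ∈ T ⊗ E` contracted against `w ∈ E` by the Hermitian metric of `E`. -/
def contractConj (τ : κ → ι → ℂ) (w : κ → ℂ) : ι → ℂ :=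
  fun α => ∑ l, τ l α * conj (w l)

omit [Fintype ι] in
lemma sum_contractConj_moment [DecidableEq κ] (τ : κ → ι → ℂ) (w : Ψ → κ → ℂ) (c : ℂ)
    (hw : ∀ i j k l, ∑ ψ, w ψ i * w ψ j * conj (w ψ k) * conj (w ψ l) =
      if (i = k ∧ j = l) ∨ (i = l ∧ j = k) then c else 0) (α β : ι) (i k : κ) :
    ∑ ψ, contractConj τ (w ψ) α * conj (contractConj τ (w ψ) β) * w ψ i * conj (w ψ k) =
      c * (τ i α * conj (τ k β) +
        if i = k then ∑ l, τ l α * conj (τ l β) - τ i α * conj (τ i β) else 0) := by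
  have expand : ∀ ψ, contractConj τ (w ψ) α * conj (contractConj τ (w ψ) β) * w ψ i *
      conj (w ψ k) =
        ∑ l, ∑ j, τ l α * conj (τ j β) * (w ψ i * w ψ j * conj (w ψ l) * conj (w ψ k)) := by
    intro ψ
    simp only [contractConj, map_sum, map_mul, Complex.conj_conj, sum_mul, mul_sum]
    rw [sum_comm]
    exact sum_congr rfl fun l _ => sum_congr rfl fun j _ => by ring
  have moment : ∀ l j, ∑ ψ, w ψ i * w ψ j * conj (w ψ l) * conj (w ψ k) =
      if i = k then (if j = l then c else 0) else if i = l ∧ j = k then c else 0 := by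
    intro l j
    rw [hw]
    grind
  simp only [expand]
  rw [sum_comm]
  simp only [sum_comm (γ := Ψ), ← mul_sum, moment]
  by_cases hik : i = k
  · simp [hik, mul_sum, mul_comm]
  · simp [ite_and, hik, mul_comm]

lemma sum_griffithsForm_contractConj [DecidableEq κ] (Θ : ι → ι → κ → κ → ℂ)
    (τ : κ → ι → ℂ) (w : Ψ → κ → ℂ) (c : ℂ)
    (hw : ∀ i j k l, ∑ ψ, w ψ i * w ψ j * conj (w ψ k) * conj (w ψ l) =
      if (i = k ∧ j = l) ∨ (i = l ∧ j = k) then c else 0) :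
    ∑ ψ, griffithsForm Θ (contractConj τ (w ψ)) (w ψ) =
      c * ((∑ α, ∑ β, ∑ i, ∑ k, Θ α β k k * τ i α * conj (τ i β)) +
        (∑ α, ∑ β, ∑ i, ∑ k, Θ α β i k * τ i α * conj (τ k β)) -
          ∑ α, ∑ β, ∑ i, Θ α β i i * τ i α * conj (τ i β)) := by
  have summand : ∀ α β i k, ∑ ψ, Θ α β i k * contractConj τ (w ψ) α *
      conj (contractConj τ (w ψ) β) * w ψ i * conj (w ψ k) =
        Θ α β i k * (c * (τ i α * conj (τ k β) +
          if i = k then ∑ l, τ l α * conj (τ l β) - τ i α * conj (τ i β) else 0)) := by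
    intro α β i k
    rw [← sum_contractConj_moment τ w c hw, mul_sum]
    simp only [mul_assoc]
  have first_sum : ∑ α, ∑ β, ∑ i, ∑ k, Θ α β k k * τ i α * conj (τ i β) =
      ∑ α, ∑ β, ∑ k, Θ α β k k * ∑ i, τ i α * conj (τ i β) := by
    simp only [mul_sum, mul_assoc]
    exact sum_congr rfl fun α _ => sum_congr rfl fun β _ => sum_comm
  unfold griffithsForm
  rw [sum_comm]
  simp only [sum_comm (γ := Ψ), summand]
  simp only [mul_add, mul_ite, mul_zero, sum_add_distrib, sum_ite_eq, mem_univ, if_true]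
  simp only [mul_left_comm (Θ _ _ _ _) c, ← mul_sum, ← mul_add]
  congr 1
  rw [first_sum]
  simp only [mul_sub, sum_sub_distrib, mul_assoc]
  ring

omit [Fintype ι] in
lemma exists_contractConj_ne_zero [DecidableEq κ] {τ : κ → ι → ℂ} (hτ : τ ≠ 0)
    (w : Ψ → κ → ℂ) {c : ℂ} (hc : c ≠ 0)
    (hw : ∀ i j, ∑ ψ, w ψ i * conj (w ψ j) = if i = j then c else 0) :
    ∃ ψ, contractConj τ (w ψ) ≠ 0 := by
  by_contra! hzero
  obtain ⟨i, hi⟩ := Function.ne_iff.mp hτ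
  obtain ⟨α, hiα⟩ := Function.ne_iff.mp hi
  have recover : ∑ ψ, w ψ i * contractConj τ (w ψ) α = c * τ i α := by
    simp only [contractConj, mul_sum, mul_left_comm (w _ i)]
    rw [sum_comm]
    simp [← mul_sum, hw, mul_comm]
  simp only [hzero, Pi.zero_apply, mul_zero, sum_const_zero] at recover
  exact hiα (by simpa [hc] using recover.symm)

end GriffithsForm

section Phases

variable {κ : Type*} [Fintype κ] [DecidableEq κ]

/-- Any group in which `eᵢ + eⱼ = eₖ + eₗ` forces `{i, j} = {k, l}` would do in place of `ℤ/3`,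
the smallest one since `1 + 1 ≠ 0` there. -/
noncomputable def phase (ψ : AddChar (κ → ZMod 3) ℂ) : κ → ℂ :=
  fun i => ψ (Pi.single i 1)

lemma phase_ne_zero (ψ : AddChar (κ → ZMod 3) ℂ) (i : κ) : phase ψ ≠ 0 := fun h => by
  have hi : ψ (Pi.single i 1) = 0 := congrFun h i
  simpa [hi] using ψ.norm_apply (Pi.single i 1)

lemma sum_phase_mul_conj_phase (i j : κ) :
    ∑ ψ, phase ψ i * conj (phase ψ j) =
      if i = j then (Fintype.card (κ → ZMod 3) : ℂ) else 0 := by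
  have single_inj : (Pi.single i 1 : κ → ZMod 3) = Pi.single j 1 ↔ i = j := by
    refine ⟨fun h => ?_, fun h => h ▸ rfl⟩
    by_contra hij
    simpa [Pi.single_apply, hij] using congrFun h i
  simp only [phase, AddChar.sum_apply_mul_conj_apply, single_inj]

lemma sum_phase_fourth_moment (i j k l : κ) :
    ∑ ψ, phase ψ i * phase ψ j * conj (phase ψ k) * conj (phase ψ l) =
      if (i = k ∧ j = l) ∨ (i = l ∧ j = k) then (Fintype.card (κ → ZMod 3) : ℂ) else 0 := by
  have two_ne_zero : (1 + 1 : ZMod 3) ≠ 0 := by decide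
  simp [phase, AddChar.sum_apply_mul_apply_mul_conj_apply_mul_conj_apply,
    Pi.single_add_single_eq_single_add_single one_ne_zero one_ne_zero, two_ne_zero]

end Phases

theorem griffiths_pos_implies_nakano_pos_tensor_det_general (n r : ℕ)
    (Θ : Fin n → Fin n → Fin r → Fin r → ℂ)
    (hgriff_nonneg : ∀ (v : Fin n → ℂ) (w : Fin r → ℂ),
      0 ≤ (∑ α : Fin n, ∑ β : Fin n, ∑ i : Fin r, ∑ k : Fin r,
        Θ α β i k * v α * (starRingEnd ℂ) (v β) * w i * (starRingEnd ℂ) (w k)).re)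
    (hgriff_pos : ∀ (v : Fin n → ℂ) (w : Fin r → ℂ), v ≠ 0 → w ≠ 0 →
      0 < (∑ α : Fin n, ∑ β : Fin n, ∑ i : Fin r, ∑ k : Fin r,
        Θ α β i k * v α * (starRingEnd ℂ) (v β) * w i * (starRingEnd ℂ) (w k)).re)
    (τ : Fin r → Fin n → ℂ) (hτ : τ ≠ 0) :
    0 < ((∑ α : Fin n, ∑ β : Fin n, ∑ i : Fin r, ∑ k : Fin r,
            Θ α β k k * τ i α * (starRingEnd ℂ) (τ i β))
          + ∑ α : Fin n, ∑ β : Fin n, ∑ i : Fin r, ∑ k : Fin r,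
            Θ α β i k * τ i α * (starRingEnd ℂ) (τ k β)).re := by
  obtain ⟨i₀, -⟩ := Function.ne_iff.mp hτ
  set N : ℕ := Fintype.card (Fin r → ZMod 3)
  have hN : (N : ℂ) ≠ 0 := Nat.cast_ne_zero.mpr Fintype.card_ne_zero
  have average := sum_griffithsForm_contractConj Θ τ phase N sum_phase_fourth_moment
  have diag_nonneg : 0 ≤ (∑ α, ∑ β, ∑ i, Θ α β i i * τ i α * conj (τ i β)).re := by
    rw [← sum_griffithsForm_single, Complex.re_sum]
    exact sum_nonneg fun i _ => hgriff_nonneg _ _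
  obtain ⟨ψ₀, hψ₀⟩ := exists_contractConj_ne_zero hτ phase hN sum_phase_mul_conj_phase
  have average_pos : 0 < (∑ ψ, griffithsForm Θ (contractConj τ (phase ψ)) (phase ψ)).re := by
    rw [Complex.re_sum]
    exact sum_pos' (fun ψ _ => hgriff_nonneg _ _)
      ⟨ψ₀, mem_univ _, hgriff_pos _ _ hψ₀ (phase_ne_zero ψ₀ i₀)⟩
  rw [average, ← Complex.ofReal_natCast, Complex.re_ofReal_mul] at average_pos
  have difference_pos := pos_of_mul_pos_right average_pos N.cast_nonneg
  rw [Complex.sub_re] at difference_pos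
  linarith

/-- Demailly–Skoda: Griffiths positivity of `(E, h)` implies Nakano positivity of
`E ⊗ det E`. In components: if the Hermitian curvature tensor `Θ` is Griffiths
nonnegative, and positive on nonzero pairs, then for every nonzero `τ = (τ^{iα})`,
`Σ Θ_{αβ̄kk̄} τ^{iα} conj(τ^{iβ}) + Σ Θ_{αβ̄ik̄} τ^{iα} conj(τ^{kβ}) > 0`. -/
theorem griffiths_pos_implies_nakano_pos_tensor_det (n r : ℕ)
    (Θ : Fin n → Fin n → Fin r → Fin r → ℂ)
    (hherm : ∀ α β i k, (starRingEnd ℂ) (Θ α β i k) = Θ β α k i)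
    (hgriff_nonneg : ∀ (v : Fin n → ℂ) (w : Fin r → ℂ),
      0 ≤ (∑ α : Fin n, ∑ β : Fin n, ∑ i : Fin r, ∑ k : Fin r,
        Θ α β i k * v α * (starRingEnd ℂ) (v β) * w i * (starRingEnd ℂ) (w k)).re)
    (hgriff_pos : ∀ (v : Fin n → ℂ) (w : Fin r → ℂ), v ≠ 0 → w ≠ 0 →
      0 < (∑ α : Fin n, ∑ β : Fin n, ∑ i : Fin r, ∑ k : Fin r,
        Θ α β i k * v α * (starRingEnd ℂ) (v β) * w i * (starRingEnd ℂ) (w k)).re)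
    (τ : Fin r → Fin n → ℂ) (hτ : τ ≠ 0) :
    0 < ((∑ α : Fin n, ∑ β : Fin n, ∑ i : Fin r, ∑ k : Fin r,
            Θ α β k k * τ i α * (starRingEnd ℂ) (τ i β))
          + ∑ α : Fin n, ∑ β : Fin n, ∑ i : Fin r, ∑ k : Fin r,
            Θ α β i k * τ i α * (starRingEnd ℂ) (τ k β)).re :=
  griffiths_pos_implies_nakano_pos_tensor_det_general n r Θ hgriff_nonneg hgriff_pos τ hτ
end

section
/- Let 1 < k < n be integers and let R be a curvature-type tensor on ℂⁿ with Kähler symmetries. Fix a unit vector X and an orthonormal basis {E₁ = X, E₂, …, Eₙ} of ℂⁿ. For each k-element subset S ⊆ {2,…,n} of size k−1, let Ric_k^S(X) = R(X,X̄,X,X̄) + Σ_{i∈S} R(X,X̄,Eᵢ,Ēᵢ). If Ric_k^S(X) ≤ −(k+1)σ for every such subset S, then summing over all (n−1 choose k−1) subsets yields (n−1 choose k−1)·R(X,X̄,X,X̄) + (n−2 choose k−2)·(Ric(X,X̄) − R(X,X̄,X,X̄)) ≤ −(k+1)σ·(n−1 choose k−1), which simplifies to (n−k)·R(X,X̄,X,X̄)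 + (k−1)·Ric(X,X̄) ≤ −(n−1)(k+1)σ. -/
/-!
Summing the hypothesis over all `(k-1)`-subsets of `{E₂, …, Eₙ}` counts each `R(X,X̄,Eᵢ,Ēᵢ)`,
`i ≥ 2`, exactly `C(n-2, k-2)` times, and `(n-1) C(n-2, k-2) = (k-1) C(n-1, k-1)`; dividing by
`C(n-1, k-1)` gives the averaged inequality `(n-1) R(X,X̄,X,X̄) + (k-1) Σ_{i≥2} R(X,X̄,Eᵢ,Ēᵢ) ≤ …`,
which is the claim once `Ric(X,X̄)` is split off its `i = 1` term.
-/

open Finset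

namespace Finset

variable {α : Type*} [DecidableEq α]

theorem card_filter_powersetCard_mem {s : Finset α} {a : α} (ha : a ∈ s) (m : ℕ) :
    #{t ∈ s.powersetCard (m + 1) | a ∈ t} = (#s - 1).choose m := by
  simpa using card_filter_powersetCard_subset {a} s (m + 1) (by simpa) (by simp)

theorem sum_powersetCard_sum {M : Type*} [AddCommMonoid M] (s : Finset α) (m : ℕ) (f : α → M) :
    ∑ t ∈ s.powersetCard (m + 1), ∑ a ∈ t, f a = (#s - 1).choose m • ∑ a ∈ s, f a := by
  rw [sum_comm' (t' := s) (s' := fun a => {t ∈ s.powersetCard (m + 1) | a ∈ t})]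
  · rw [smul_sum]
    refine sum_congr rfl fun a ha => ?_
    rw [sum_const, card_filter_powersetCard_mem ha]
  · intro t a
    simp only [mem_powersetCard, mem_filter]
    exact ⟨fun ⟨⟨hts, hcard⟩, hat⟩ => ⟨⟨⟨hts, hcard⟩, hat⟩, hts hat⟩, fun ⟨h, _⟩ => ⟨h.1, h.2⟩⟩

theorem card_mul_add_mul_sum_le_of_forall_powersetCard (s : Finset α) {m : ℕ} (hm : m + 1 ≤ #s)
    {a c : ℝ} (f : α → ℝ) (h : ∀ t ∈ s.powersetCard (m + 1), a + ∑ i ∈ t, f i ≤ c) :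
    #s * a + (m + 1) * ∑ i ∈ s, f i ≤ #s * c := by
  obtain ⟨p, hp⟩ : ∃ p, #s = p + 1 := ⟨#s - 1, by omega⟩
  set N := (#s).choose (m + 1)
  have hN : (0 : ℝ) < N := by exact_mod_cast Nat.choose_pos hm
  have hcount : (#s : ℝ) * (p.choose m) = (m + 1) * N := by
    simp only [N, hp]; exact_mod_cast Nat.add_one_mul_choose_eq p m |>.trans (mul_comm _ _)
  have hsum : N * a + p.choose m * ∑ i ∈ s, f i ≤ N * c := by
    have := sum_le_sum h
    rwa [sum_add_distrib, sum_powersetCard_sum, sum_const, sum_const, card_powersetCard, hp,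
      add_tsub_cancel_right, nsmul_eq_mul, nsmul_eq_mul, nsmul_eq_mul, ← hp] at this
  refine le_of_mul_le_mul_left ?_ hN
  linear_combination (#s : ℝ) * hsum - (∑ i ∈ s, f i) * hcount

end Finset

/-- Combinatorial summation proof of Lemma 2.1 (Chu–Lee–Tam): fix a unit vector
`X = E 0` in an orthonormal basis `E` of `ℂⁿ`. If for every `(k−1)`-element subset
`S ⊆ {1,…,n−1}` one has `R(X,X̄,X,X̄) + Σ_{i∈S} R(X,X̄,Eᵢ,Ēᵢ) ≤ −(k+1)σ`, then
`(n−k) R(X,X̄,X,X̄) + (k−1) Ric(X,X̄) ≤ −(n−1)(k+1)σ`, where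
`Ric(X,X̄) = Σᵢ R(X,X̄,Eᵢ,Ēᵢ)` over the full basis. -/
theorem riccik_subset_summation (n k : ℕ) (hk : 1 < k) (hkn : k < n)
    (σ : ℝ)
    (R : EuclideanSpace ℂ (Fin n) → EuclideanSpace ℂ (Fin n) →
          EuclideanSpace ℂ (Fin n) → EuclideanSpace ℂ (Fin n) → ℂ)
    (E : OrthonormalBasis (Fin n) ℂ (EuclideanSpace ℂ (Fin n)))
    (X : EuclideanSpace ℂ (Fin n)) (hX0 : X = E ⟨0, by omega⟩)
    (hsub : ∀ S : Finset (Fin n), (⟨0, by omega⟩ : Fin n) ∉ S → S.card = k - 1 →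
      (R X X X X + ∑ i ∈ S, R X X (E i) (E i)).re ≤ -((k : ℝ) + 1) * σ) :
    ((n : ℝ) - k) * (R X X X X).re
      + ((k : ℝ) - 1) * (∑ i : Fin n, R X X (E i) (E i)).re
      ≤ -((n : ℝ) - 1) * ((k : ℝ) + 1) * σ := by
  set z : Fin n := ⟨0, by omega⟩
  set f : Fin n → ℝ := fun i => (R X X (E i) (E i)).re
  have hcard : #(univ.erase z) = (n - 2) + 1 := by
    rw [card_erase_of_mem (mem_univ z), card_univ, Fintype.card_fin]; omega
  have hsubsets : ∀ S ∈ (univ.erase z).powersetCard (k - 2 + 1),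
      (R X X X X).re + ∑ i ∈ S, f i ≤ -((k : ℝ) + 1) * σ := by
    intro S hS
    rw [mem_powersetCard] at hS
    simpa [Complex.re_sum] using hsub S (fun h => by simpa using hS.1 h) (by omega)
  have havg := card_mul_add_mul_sum_le_of_forall_powersetCard _ (by omega) f hsubsets
  rw [hcard] at havg
  push_cast [Nat.cast_sub (by omega : 2 ≤ n), Nat.cast_sub (by omega : 2 ≤ k)] at havg
  have hRic : (∑ i, R X X (E i) (E i)).re = (R X X X X).re + ∑ i ∈ univ.erase z, f i := by
    rw [Complex.re_sum, ← add_sum_erase _ _ (mem_univ z), ← hX0]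
  rw [hRic]
  linarith
end
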